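/- Let X_n ~ Binomial(n, p) and Y_n ~ Binomial(n + d_n, p) be independent with d_n → ∞ and 0 < p < 1. Then P(X_n = Y_n) → 0 as n → ∞. -/

import Mathlib

open Filter

/-- Binomial probability weight `P(Binomial(n,p) = k)`. -/
noncomputable def binW (n : ℕ) (p : ℝ) (k : ℕ) : ℝ :=
  (n.choose k : ℝ) * p ^ k * (1 - p) ^ (n - k)



lemma cb_sq_le (k : ℕ) : (Nat.centralBinom k)^2 * (k+1) ≤ 16^k := by
  induction k with
  | zero => simp [Nat.centralBinom]
  | succ k ih =>
    have hrec := Nat.succ_mul_centralBinom_succ k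
    have hrec2 : ((k+1) * Nat.centralBinom (k+1))^2 = (2*(2*k+1)*Nat.centralBinom k)^2 := by
      rw [hrec]
    have hpos : 0 < (k+1)^3 := by positivity
    have key : (k+1)^3 * ((Nat.centralBinom (k+1))^2 * (k+2)) ≤ (k+1)^3 * 16^(k+1) := by
      have h1 : (k+1)^3 * ((Nat.centralBinom (k+1))^2 * (k+2))
          = 4*(2*k+1)^2*(k+2) * ((Nat.centralBinom k)^2 * (k+1)) := by nlinarith [hrec2]
      rw [h1]
      calc 4*(2*k+1)^2*(k+2) * ((Nat.centralBinom k)^2 * (k+1))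
          ≤ 4*(2*k+1)^2*(k+2) * 16^k := Nat.mul_le_mul_left _ ih
        _ ≤ (k+1)^3 * 16^(k+1) := by
            have : 4*(2*k+1)^2*(k+2) ≤ 16*(k+1)^3 := by nlinarith
            calc 4*(2*k+1)^2*(k+2) * 16^k ≤ 16*(k+1)^3 * 16^k :=
                  Nat.mul_le_mul_right _ this
              _ = (k+1)^3 * 16^(k+1) := by ring
    exact Nat.le_of_mul_le_mul_left key hpos

lemma cb_sq_ge (n : ℕ) (hn : 1 ≤ n) : 16^n ≤ 4*n*(Nat.centralBinom n)^2 := by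
  induction n with
  | zero => omega
  | succ n ih =>
    rcases Nat.eq_or_lt_of_le hn with h|h
    · simp [← h]
      decide
    · have hn1 : 1 ≤ n := by omega
      have ih := ih hn1
      have hrec := Nat.succ_mul_centralBinom_succ n
      have hrec2 : ((n+1) * Nat.centralBinom (n+1))^2 = (2*(2*n+1)*Nat.centralBinom n)^2 := by
        rw [hrec]
      have hpos : 0 < n*(n+1)^2 := by positivity
      have key : n*(n+1)^2 * 16^(n+1) ≤ n*(n+1)^2 * (4*(n+1)*(Nat.centralBinom (n+1))^2) := by
      -- n(n+1)^2*16*16^n ≤ n(n+1)^2*16*4n c^2 = 64 n^2 (n+1)^2 c^2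
      -- rhs: 4n(n+1)*((n+1)c')^2 = 4n(n+1)*4(2n+1)^2 c^2 = 16 n(n+1)(2n+1)^2 c^2
        have h1 : n*(n+1)^2 * (4*(n+1)*(Nat.centralBinom (n+1))^2)
            = 4*n*(n+1)*(2*(2*n+1)*Nat.centralBinom n)^2 := by nlinarith [hrec2]
        rw [h1]
        have h2 : 64*n^2*(n+1)^2 ≤ 16*n*(n+1)*(2*n+1)^2 := by nlinarith
        calc n*(n+1)^2 * 16^(n+1) = n*(n+1)^2*16 * (16^n) := by ring
          _ ≤ n*(n+1)^2*16 * (4*n*(Nat.centralBinom n)^2) := Nat.mul_le_mul_left _ ih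
          _ = 64*n^2*(n+1)^2 * (Nat.centralBinom n)^2 := by ring
          _ ≤ 16*n*(n+1)*(2*n+1)^2 * (Nat.centralBinom n)^2 := Nat.mul_le_mul_right _ h2
          _ = 4*n*(n+1)*(2*(2*n+1)*Nat.centralBinom n)^2 := by ring
      exact Nat.le_of_mul_le_mul_left key hpos

lemma le_of_sq_le_sq' {a b : ℝ} (ha : 0 ≤ a) (hb : 0 ≤ b) (h : a^2 ≤ b^2) : a ≤ b := by
  nlinarith

lemma cbR_le (k : ℕ) : ((2*k).choose k : ℝ) * Real.sqrt (k+1) ≤ 4^k := by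
  have h := cb_sq_le k
  have hc : ((Nat.centralBinom k : ℝ))^2 * ((k:ℝ)+1) ≤ 16^k := by exact_mod_cast h
  have hs : Real.sqrt ((k:ℝ)+1) ^ 2 = (k:ℝ)+1 := Real.sq_sqrt (by positivity)
  have : (Nat.centralBinom k : ℝ) = ((2*k).choose k : ℝ) := by
    simp [Nat.centralBinom]
  rw [this] at hc
  apply le_of_sq_le_sq' (by positivity) (by positivity)
  have h16 : ((4:ℝ)^k)^2 = 16^k := by
    rw [← pow_mul, pow_mul']; norm_num
  rw [mul_pow, hs, h16]
  exact hc

lemma cbR_ge (n : ℕ) (hn : 1 ≤ n) : (4:ℝ)^n ≤ 2 * Real.sqrt n * ((2*n).choose n : ℝ) := by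
  have h := cb_sq_ge n hn
  have hc : (16:ℝ)^n ≤ 4*(n:ℝ)*((Nat.centralBinom n : ℝ))^2 := by exact_mod_cast h
  have hs : Real.sqrt (n:ℝ) ^ 2 = (n:ℝ) := Real.sq_sqrt (by positivity)
  have he : (Nat.centralBinom n : ℝ) = ((2*n).choose n : ℝ) := by simp [Nat.centralBinom]
  rw [he] at hc
  apply le_of_sq_le_sq' (by positivity) (by positivity)
  have h16 : ((4:ℝ)^n)^2 = 16^n := by rw [← pow_mul, pow_mul']; norm_num
  rw [h16, mul_pow, mul_pow, hs]
  nlinarith [hc]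

lemma choose_sq_id (k m : ℕ) :
    (((k+m).choose k : ℝ))^2 * ((2*(k+m)).choose (k+m) : ℝ)
      = ((2*(k+m)).choose (2*k) : ℝ) * ((2*k).choose k : ℝ) * ((2*m).choose m : ℝ) := by
  have e1 : ((k+m).choose k : ℝ) = (Nat.factorial (k+m)) / (Nat.factorial k * Nat.factorial m) := by
    rw [Nat.cast_choose ℝ (Nat.le_add_right k m), Nat.add_sub_cancel_left]
  have e2 : ((2*(k+m)).choose (k+m) : ℝ) = (Nat.factorial (2*(k+m))) / ((Nat.factorial (k+m)) * (Nat.factorial (k+m))) := by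
    rw [Nat.cast_choose ℝ (by omega), show 2*(k+m) - (k+m) = k+m by omega]
  have e3 : ((2*(k+m)).choose (2*k) : ℝ) = (Nat.factorial (2*(k+m))) / (Nat.factorial (2*k) * Nat.factorial (2*m)) := by
    rw [Nat.cast_choose ℝ (by omega), show 2*(k+m) - 2*k = 2*m by omega]
  have e4 : ((2*k).choose k : ℝ) = (Nat.factorial (2*k)) / (Nat.factorial k * Nat.factorial k) := by
    rw [Nat.cast_choose ℝ (by omega), show 2*k - k = k by omega]
  have e5 : ((2*m).choose m : ℝ) = (Nat.factorial (2*m)) / (Nat.factorial m * Nat.factorial m) := by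
    rw [Nat.cast_choose ℝ (by omega), show 2*m - m = m by omega]
  rw [e1, e2, e3, e4, e5]
  have f1 : (Nat.factorial k : ℝ) ≠ 0 := by exact_mod_cast Nat.factorial_ne_zero k
  have f2 : (Nat.factorial m : ℝ) ≠ 0 := by exact_mod_cast Nat.factorial_ne_zero m
  have f3 : ((Nat.factorial (k+m)) : ℝ) ≠ 0 := by exact_mod_cast Nat.factorial_ne_zero (k+m)
  have f4 : (Nat.factorial (2*k) : ℝ) ≠ 0 := by exact_mod_cast Nat.factorial_ne_zero (2*k)
  have f5 : (Nat.factorial (2*m) : ℝ) ≠ 0 := by exact_mod_cast Nat.factorial_ne_zero (2*m)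
  field_simp
lemma oddsum (x y : ℝ) (hx : 0 ≤ x) (hy : 0 ≤ y) (n : ℕ) :
    ∑ k ∈ Finset.range (n+1), (((2*n+1).choose (2*k+1)):ℝ) * x^(2*k+1) * y^(2*(n-k))
      ≤ (x+y)^(2*n+1) := by
  rw [add_pow]
  have himg : ∀ k ∈ Finset.range (n+1),
      (((2*n+1).choose (2*k+1)):ℝ) * x^(2*k+1) * y^(2*(n-k))
        = x^(2*k+1) * y^(2*n+1 - (2*k+1)) * ((2*n+1).choose (2*k+1) : ℝ) := by
    intro k hk
    have hk' : k ≤ n := by simpa [Nat.lt_succ_iff] using hk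
    have : 2*n+1 - (2*k+1) = 2*(n-k) := by omega
    rw [this]; ring
  rw [Finset.sum_congr rfl himg]
  set g : ℕ → ℝ := fun j => x^j * y^(2*n+1-j) * ((2*n+1).choose j : ℝ) with hg
  have hsum : ∑ k ∈ Finset.range (n+1), g (2*k+1)
      = ∑ j ∈ (Finset.range (n+1)).image (fun k => 2*k+1), g j := by
    rw [Finset.sum_image]
    intro a _ b _ h
    simp only at h
    omega
  calc ∑ k ∈ Finset.range (n+1),
        x^(2*k+1) * y^(2*n+1 - (2*k+1)) * ((2*n+1).choose (2*k+1) : ℝ)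
      = ∑ j ∈ (Finset.range (n+1)).image (fun k => 2*k+1), g j := hsum
    _ ≤ ∑ j ∈ Finset.range (2*n+1+1), g j := by
        apply Finset.sum_le_sum_of_subset_of_nonneg
        · intro j hj
          simp only [Finset.mem_image, Finset.mem_range] at hj ⊢
          omega
        · intro j _ _
          simp only [hg]
          positivity
    _ = ∑ j ∈ Finset.range (2*n+1+1), x^j * y^(2*n+1-j) * ((2*n+1).choose j : ℝ) := rfl

lemma sum_div_succ_le (x y : ℝ) (hx : 0 < x) (hy : 0 ≤ y) (hxy : x + y = 1) (n : ℕ) :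
    ∑ k ∈ Finset.range (n+1), ((2*n).choose (2*k) : ℝ) * x^(2*k) * y^(2*(n-k)) / (k+1)
      ≤ 2 / ((2*n+1)*x) := by
  have key : ∀ k ∈ Finset.range (n+1),
      ((2*n).choose (2*k) : ℝ) * x^(2*k) * y^(2*(n-k)) / (k+1)
        ≤ (2/((2*n+1)*x)) * ((((2*n+1).choose (2*k+1)):ℝ) * x^(2*k+1) * y^(2*(n-k))) := by
    intro k _
    have hN : (2*n+1) * (2*n).choose (2*k) = (2*n+1).choose (2*k+1) * (2*k+1) :=
      Nat.add_one_mul_choose_eq (2*n) (2*k)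
    have hNR : ((2*n:ℕ)+1 : ℝ) * ((2*n).choose (2*k) : ℝ)
        = ((2*n+1).choose (2*k+1) : ℝ) * (2*(k:ℝ)+1) := by exact_mod_cast hN
    have h1 : ((2*n).choose (2*k) : ℝ)/(k+1) ≤ 2*((2*n+1).choose (2*k+1):ℝ)/(2*(n:ℝ)+1) := by
      rw [div_le_div_iff₀ (by positivity) (by positivity)]
      have hD : (0:ℝ) ≤ ((2*n+1).choose (2*k+1) : ℝ) := by positivity
      push_cast at hNR
      nlinarith [hNR, hD]
    have hrhs : (2/((2*(n:ℝ)+1)*x)) * ((((2*n+1).choose (2*k+1)):ℝ) * x^(2*k+1) * y^(2*(n-k)))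
        = (2*((2*n+1).choose (2*k+1):ℝ)/(2*(n:ℝ)+1)) * (x^(2*k) * y^(2*(n-k))) := by
      rw [pow_succ]
      field_simp
    have hlhs : ((2*n).choose (2*k) : ℝ) * x^(2*k) * y^(2*(n-k)) / ((k:ℝ)+1)
        = (((2*n).choose (2*k) : ℝ)/((k:ℝ)+1)) * (x^(2*k) * y^(2*(n-k))) := by
      ring
    push_cast
    push_cast at hrhs hlhs
    rw [hlhs, hrhs]
    exact mul_le_mul_of_nonneg_right h1 (by positivity)
  calc ∑ k ∈ Finset.range (n+1), ((2*n).choose (2*k) : ℝ) * x^(2*k) * y^(2*(n-k)) / (k+1)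
      ≤ ∑ k ∈ Finset.range (n+1),
          (2/((2*n+1)*x)) * ((((2*n+1).choose (2*k+1)):ℝ) * x^(2*k+1) * y^(2*(n-k))) :=
        Finset.sum_le_sum key
    _ = (2/((2*n+1)*x)) * ∑ k ∈ Finset.range (n+1),
          (((2*n+1).choose (2*k+1)):ℝ) * x^(2*k+1) * y^(2*(n-k)) := by
        rw [Finset.mul_sum]
    _ ≤ (2/((2*n+1)*x)) * (x+y)^(2*n+1) := by
        apply mul_le_mul_of_nonneg_left (oddsum x y hx.le hy n) (by positivity)
    _ = 2/((2*n+1)*x) := by rw [hxy]; simp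
lemma term_bound (p : ℝ) (hp0 : 0 < p) (hp1 : p < 1) (k m : ℕ) (hn : 1 ≤ k + m) :
    (binW (k+m) p k)^2 ≤ Real.sqrt ((k:ℝ)+(m:ℝ)) *
      (((2*(k+m)).choose (2*k) : ℝ) * p^(2*k) * (1-p)^(2*m)
        * (1/((k:ℝ)+1) + 1/((m:ℝ)+1))) := by
  have hq : 0 < 1 - p := by linarith
  set b : ℝ := ((k+m).choose k : ℝ) with hb
  set B : ℝ := ((2*(k+m)).choose (2*k) : ℝ) with hB
  set C : ℝ := ((2*(k+m)).choose (k+m) : ℝ) with hC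
  set c1 : ℝ := ((2*k).choose k : ℝ) with hc1
  set c2 : ℝ := ((2*m).choose m : ℝ) with hc2
  set sk : ℝ := Real.sqrt ((k:ℝ)+1) with hsk
  set sm : ℝ := Real.sqrt ((m:ℝ)+1) with hsm
  set sn : ℝ := Real.sqrt ((k:ℝ)+(m:ℝ)) with hsn
  have hskpos : 0 < sk := Real.sqrt_pos.mpr (by positivity)
  have hsmpos : 0 < sm := Real.sqrt_pos.mpr (by positivity)
  have hsk2 : sk^2 = (k:ℝ)+1 := Real.sq_sqrt (by positivity)
  have hsm2 : sm^2 = (m:ℝ)+1 := Real.sq_sqrt (by positivity)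
  have hsnn : 0 ≤ sn := Real.sqrt_nonneg _
  have hCpos : 0 < C := by
    have h : 0 < (2*(k+m)).choose (k+m) := Nat.choose_pos (by omega)
    rw [hC]
    exact_mod_cast h
  have hBnn : 0 ≤ B := by positivity
  have hid : b^2 * C = B * c1 * c2 := choose_sq_id k m
  have h1 : c1 * sk ≤ 4^k := by rw [hc1, hsk]; exact cbR_le k
  have h2 : c2 * sm ≤ 4^m := by rw [hc2, hsm]; exact cbR_le m
  have hcast : ((k+m : ℕ) : ℝ) = (k:ℝ)+(m:ℝ) := by push_cast; ring
  have h3 : (4:ℝ)^(k+m) ≤ 2 * sn * C := by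
    have h := cbR_ge (k+m) hn
    rw [hcast] at h
    rw [hsn, hC]
    exact h
  have hb2 : b^2 * (sk*sm) ≤ 2*sn*B := by
    have hstep : b^2 * (sk*sm) * C ≤ 2*sn*B * C := by
      calc b^2 * (sk*sm) * C = (b^2 * C) * (sk*sm) := by ring
        _ = B * ((c1*sk) * (c2*sm)) := by rw [hid]; ring
        _ ≤ B * ((4:ℝ)^k * 4^m) := by
            apply mul_le_mul_of_nonneg_left _ hBnn
            exact mul_le_mul h1 h2 (by positivity) (by positivity)
        _ = B * 4^(k+m) := by rw [pow_add]
        _ ≤ B * (2*sn*C) := mul_le_mul_of_nonneg_left h3 hBnn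
        _ = 2*sn*B*C := by ring
    exact le_of_mul_le_mul_right hstep hCpos
  have hfin : b^2 * (((k:ℝ)+1) * ((m:ℝ)+1)) ≤ sn * B * (((k:ℝ)+1) + ((m:ℝ)+1)) := by
    have e1 : b^2 * (sk*sm) * (sk*sm) ≤ 2*sn*B * (sk*sm) :=
      mul_le_mul_of_nonneg_right hb2 (by positivity)
    have e2 : sn*B*(2*(sk*sm)) ≤ sn*B*(sk^2+sm^2) := by
      apply mul_le_mul_of_nonneg_left _ (by positivity)
      nlinarith [sq_nonneg (sk-sm)]
    calc b^2 * (((k:ℝ)+1) * ((m:ℝ)+1)) = b^2 * (sk*sm) * (sk*sm) := by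
          rw [← hsk2, ← hsm2]; ring
      _ ≤ 2*sn*B * (sk*sm) := e1
      _ = sn*B*(2*(sk*sm)) := by ring
      _ ≤ sn*B*(sk^2+sm^2) := e2
      _ = sn * B * (((k:ℝ)+1) + ((m:ℝ)+1)) := by rw [hsk2, hsm2]
  have hout : b^2 ≤ sn * B * (1/((k:ℝ)+1) + 1/((m:ℝ)+1)) := by
    have h4 : (1/((k:ℝ)+1) + 1/((m:ℝ)+1))
        = (((k:ℝ)+1) + ((m:ℝ)+1)) / (((k:ℝ)+1) * ((m:ℝ)+1)) := by
      field_simp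
      ring
    rw [h4, ← mul_div_assoc, le_div_iff₀ (by positivity)]
    linarith [hfin]
  have hW : (binW (k+m) p k)^2 = b^2 * (p^(2*k) * (1-p)^(2*m)) := by
    simp only [binW, Nat.add_sub_cancel_left, hb]
    ring
  rw [hW]
  calc b^2 * (p^(2*k) * (1-p)^(2*m))
      ≤ (sn * B * (1/((k:ℝ)+1) + 1/((m:ℝ)+1))) * (p^(2*k) * (1-p)^(2*m)) :=
        mul_le_mul_of_nonneg_right hout (by positivity)
    _ = Real.sqrt ((k:ℝ)+(m:ℝ)) * (B * p^(2*k) * (1-p)^(2*m) * (1/((k:ℝ)+1) + 1/((m:ℝ)+1))) := by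
        rw [← hsn]; ring
lemma binW_sq_sum_le (p : ℝ) (hp0 : 0 < p) (hp1 : p < 1) (n : ℕ) (hn : 1 ≤ n) :
    ∑ k ∈ Finset.range (n+1), (binW n p k)^2 ≤ 1/(p*(1-p)*Real.sqrt n) := by
  have hq : 0 < 1 - p := by linarith
  have hstep1 : ∑ k ∈ Finset.range (n+1), (binW n p k)^2
      ≤ ∑ k ∈ Finset.range (n+1), Real.sqrt (n:ℝ) *
          (((2*n).choose (2*k) : ℝ) * p^(2*k) * (1-p)^(2*(n-k))
            * (1/((k:ℝ)+1) + 1/(((n-k:ℕ):ℝ)+1))) := by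
    apply Finset.sum_le_sum
    intro k hk
    have hk' : k ≤ n := by simpa [Nat.lt_succ_iff] using hk
    have h := term_bound p hp0 hp1 k (n-k) (by omega)
    rw [Nat.add_sub_cancel' hk'] at h
    rw [show ((k:ℝ) + ((n-k:ℕ):ℝ)) = (n:ℝ) by rw [← Nat.cast_add, Nat.add_sub_cancel' hk']] at h
    exact h
  have hsplit : ∑ k ∈ Finset.range (n+1),
        (((2*n).choose (2*k) : ℝ) * p^(2*k) * (1-p)^(2*(n-k))
          * (1/((k:ℝ)+1) + 1/(((n-k:ℕ):ℝ)+1)))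
      = (∑ k ∈ Finset.range (n+1),
          ((2*n).choose (2*k) : ℝ) * p^(2*k) * (1-p)^(2*(n-k)) / ((k:ℝ)+1))
        + ∑ k ∈ Finset.range (n+1),
          ((2*n).choose (2*k) : ℝ) * p^(2*k) * (1-p)^(2*(n-k)) / (((n-k:ℕ):ℝ)+1) := by
    rw [← Finset.sum_add_distrib]
    apply Finset.sum_congr rfl
    intro k _
    ring
  have hSa : ∑ k ∈ Finset.range (n+1),
      ((2*n).choose (2*k) : ℝ) * p^(2*k) * (1-p)^(2*(n-k)) / ((k:ℝ)+1)
        ≤ 2/((2*(n:ℝ)+1)*p) := by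
    have h := sum_div_succ_le p (1-p) hp0 hq.le (by ring) n
    push_cast at h ⊢
    exact h
  have hSb : ∑ k ∈ Finset.range (n+1),
      ((2*n).choose (2*k) : ℝ) * p^(2*k) * (1-p)^(2*(n-k)) / (((n-k:ℕ):ℝ)+1)
        ≤ 2/((2*(n:ℝ)+1)*(1-p)) := by
    have hrefl : ∑ k ∈ Finset.range (n+1),
        ((2*n).choose (2*k) : ℝ) * p^(2*k) * (1-p)^(2*(n-k)) / (((n-k:ℕ):ℝ)+1)
        = ∑ j ∈ Finset.range (n+1),
          ((2*n).choose (2*j) : ℝ) * (1-p)^(2*j) * p^(2*(n-j)) / ((j:ℝ)+1) := by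
      rw [← Finset.sum_range_reflect]
      apply Finset.sum_congr rfl
      intro j hj
      have hj' : j ≤ n := by simpa [Nat.lt_succ_iff] using hj
      simp only [Nat.add_sub_cancel]
      rw [show n - (n - j) = j by omega]
      rw [show 2*(n-j) = 2*n - 2*j by omega, Nat.choose_symm (by omega : 2*j ≤ 2*n)]
      ring
    rw [hrefl]
    have h := sum_div_succ_le (1-p) p hq hp0.le (by ring) n
    push_cast at h ⊢
    exact h
  have hs : Real.sqrt (n:ℝ) ^ 2 = (n:ℝ) := Real.sq_sqrt (by positivity)
  have hspos : 0 < Real.sqrt (n:ℝ) := Real.sqrt_pos.mpr (by exact_mod_cast hn)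
  calc ∑ k ∈ Finset.range (n+1), (binW n p k)^2
      ≤ ∑ k ∈ Finset.range (n+1), Real.sqrt (n:ℝ) *
          (((2*n).choose (2*k) : ℝ) * p^(2*k) * (1-p)^(2*(n-k))
            * (1/((k:ℝ)+1) + 1/(((n-k:ℕ):ℝ)+1))) := hstep1
    _ = Real.sqrt (n:ℝ) * ∑ k ∈ Finset.range (n+1),
          (((2*n).choose (2*k) : ℝ) * p^(2*k) * (1-p)^(2*(n-k))
            * (1/((k:ℝ)+1) + 1/(((n-k:ℕ):ℝ)+1))) := by rw [Finset.mul_sum]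
    _ ≤ Real.sqrt (n:ℝ) * (2/((2*(n:ℝ)+1)*p) + 2/((2*(n:ℝ)+1)*(1-p))) := by
        apply mul_le_mul_of_nonneg_left _ hspos.le
        rw [hsplit]
        exact add_le_add hSa hSb
    _ = 2 * Real.sqrt (n:ℝ) / ((2*(n:ℝ)+1) * (p*(1-p))) := by
        field_simp
        ring
    _ ≤ 1/(p*(1-p)*Real.sqrt n) := by
        rw [div_le_div_iff₀ (by positivity) (by positivity)]
        nlinarith [hs, hspos, mul_pos hp0 hq, mul_pos (mul_pos hp0 hq) (mul_pos hspos hspos)]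
lemma binW_nonneg (n : ℕ) (p : ℝ) (k : ℕ) (hp0 : 0 ≤ p) (hp1 : p ≤ 1) : 0 ≤ binW n p k := by
  have : 0 ≤ 1 - p := by linarith
  unfold binW
  positivity

/-- For independent `X_n ~ Binomial(n, p)` and `Y_n ~ Binomial(n + dₙ, p)` with `dₙ → ∞`
and `0 < p < 1`, `P(X_n = Y_n) → 0` as `n → ∞`. -/
theorem prob_equal_degrees_diverging_gap_tendsto_zero (d : ℕ → ℕ)
    (hd : Tendsto d atTop atTop) (p : ℝ) (hp0 : 0 < p) (hp1 : p < 1) :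
    Tendsto (fun n : ℕ =>
        ∑ k ∈ Finset.range (n + 1), ∑ l ∈ Finset.range (n + d n + 1),
          binW n p k * binW (n + d n) p l * (if k = l then (1 : ℝ) else 0))
      atTop (nhds 0) := by
  have hq : 0 < 1 - p := by linarith
  have hT : ∀ n : ℕ,
      (∑ k ∈ Finset.range (n + 1), ∑ l ∈ Finset.range (n + d n + 1),
          binW n p k * binW (n + d n) p l * (if k = l then (1 : ℝ) else 0))
        = ∑ k ∈ Finset.range (n + 1), binW n p k * binW (n + d n) p k := by
    intro n
    apply Finset.sum_congr rfl
    intro k hk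
    have hk' : k < n + d n + 1 := by
      simp only [Finset.mem_range] at hk; omega
    calc ∑ l ∈ Finset.range (n + d n + 1),
          binW n p k * binW (n + d n) p l * (if k = l then (1:ℝ) else 0)
        = ∑ l ∈ Finset.range (n + d n + 1),
            (if k = l then binW n p k * binW (n + d n) p l else 0) := by
          apply Finset.sum_congr rfl
          intro l _
          split <;> simp
      _ = binW n p k * binW (n + d n) p k := by
          rw [Finset.sum_ite_eq]
          exact if_pos (Finset.mem_range.mpr hk')
  have hub : ∀ n : ℕ, 1 ≤ n →
      ∑ k ∈ Finset.range (n + 1), binW n p k * binW (n + d n) p k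
        ≤ 1/(p*(1-p)*Real.sqrt n) := by
    intro n hn
    set m := n + d n with hm
    have hnm : n ≤ m := by omega
    have hmn1 : 1 ≤ m := by omega
    have step1 : ∑ k ∈ Finset.range (n + 1), binW n p k * binW m p k
        ≤ (∑ k ∈ Finset.range (n + 1), (binW n p k)^2
            + ∑ k ∈ Finset.range (n + 1), (binW m p k)^2) / 2 := by
      rw [← Finset.sum_add_distrib, Finset.sum_div]
      apply Finset.sum_le_sum
      intro k _
      nlinarith [sq_nonneg (binW n p k - binW m p k)]
    have step2 : ∑ k ∈ Finset.range (n + 1), (binW m p k)^2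
        ≤ ∑ k ∈ Finset.range (m + 1), (binW m p k)^2 := by
      apply Finset.sum_le_sum_of_subset_of_nonneg
      · exact Finset.range_subset_range.mpr (by omega)
      · intro k _ _; positivity
    have hb1 := binW_sq_sum_le p hp0 hp1 n hn
    have hb2 := binW_sq_sum_le p hp0 hp1 m hmn1
    have hmono : 1/(p*(1-p)*Real.sqrt m) ≤ 1/(p*(1-p)*Real.sqrt n) := by
      have hsn : 0 < Real.sqrt (n:ℝ) := Real.sqrt_pos.mpr (by exact_mod_cast hn)
      have hle : Real.sqrt (n:ℝ) ≤ Real.sqrt (m:ℝ) :=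
        Real.sqrt_le_sqrt (by exact_mod_cast hnm)
      gcongr
    calc ∑ k ∈ Finset.range (n + 1), binW n p k * binW m p k
        ≤ (∑ k ∈ Finset.range (n + 1), (binW n p k)^2
            + ∑ k ∈ Finset.range (n + 1), (binW m p k)^2) / 2 := step1
      _ ≤ (1/(p*(1-p)*Real.sqrt n) + 1/(p*(1-p)*Real.sqrt n)) / 2 := by
          have := le_trans step2 hb2
          have := le_trans this hmono
          linarith [hb1]
      _ = 1/(p*(1-p)*Real.sqrt n) := by ring
  have hsq : Tendsto (fun n : ℕ => Real.sqrt n) atTop atTop := by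
    apply Filter.tendsto_atTop_atTop.mpr
    intro b
    refine ⟨Nat.ceil (b^2), fun n hn => ?_⟩
    have hcb : (b:ℝ)^2 ≤ (n:ℝ) := by
      calc (b:ℝ)^2 ≤ (Nat.ceil (b^2) : ℝ) := Nat.le_ceil _
        _ ≤ (n:ℝ) := by exact_mod_cast hn
    calc b ≤ √(b^2) := by rw [Real.sqrt_sq_eq_abs]; exact le_abs_self b
      _ ≤ √(n:ℝ) := Real.sqrt_le_sqrt hcb
  have hmul : Tendsto (fun n : ℕ => p*(1-p)*Real.sqrt n) atTop atTop :=
    Tendsto.const_mul_atTop (by positivity) hsq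
  have hlim : Tendsto (fun n : ℕ => 1/(p*(1-p)*Real.sqrt n)) atTop (nhds 0) := by
    simp only [one_div]
    exact hmul.inv_tendsto_atTop
  apply tendsto_of_tendsto_of_tendsto_of_le_of_le' tendsto_const_nhds hlim
  · filter_upwards with n
    rw [hT n]
    apply Finset.sum_nonneg
    intro k _
    exact mul_nonneg (binW_nonneg _ _ _ hp0.le hp1.le) (binW_nonneg _ _ _ hp0.le hp1.le)
  · filter_upwards [eventually_ge_atTop 1] with n hn
    rw [hT n]
    exact hub n hn
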